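/- For a = 1, 2, let (H_a, {J_{a,k}}_{k∈K_a}) specify Lindblad generators L_a on n_a×n_a complex matrices with real weights {w^{(a)}_k}_{k∈K_a}. Consider the joint Lindblad generator L on (n_1·n_2)×(n_1·n_2) matrices with Hamiltonian H = H_1⊗1 + 1⊗H_2 and jump operators {J_{1,k}⊗1 : k ∈ K_1} ∪ {1⊗J_{2,k} : k ∈ K_2}, where the jump operator coming from subsystem a of type k carries weight w^{(a)}_k. Suppose the joint system has a product steady state ρˢˢ = ρ_1 ⊗ ρ_2 with ρ_1, ρ_2 density matrices, and suppose the improper integrals defining the noises of the joint system and of both subsystems converge entrywise. Then ρ_a is a steady state of L_a for a = 1, 2, and the joint asymptotic average current and noise satisfy F = F^{(1)} + F^{(2)} and D = D^{(1)} + D^{(2)}, where F^{(a)} and D^{(a)} denote the asymptotic average current and noise of subsystem a computed with generator L_a, steady state ρ_a and weights {w^{(a)}_k}. -/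

import Mathlib

open Matrix Kronecker MeasureTheory
open scoped ComplexOrder

/-- The Lindblad generator with Hamiltonian `H` and jump operators `J k`:
`L[ρ] = −i(Hρ − ρH) + Σ_k (J_k ρ J_k† − ½(J_k†J_k ρ + ρ J_k†J_k))`. -/
noncomputable def lindblad {n K : Type} [Fintype n] [Fintype K]
    (H : Matrix n n ℂ) (J : K → Matrix n n ℂ) (ρ : Matrix n n ℂ) : Matrix n n ℂ :=
  (-Complex.I) • (H * ρ - ρ * H) +
    ∑ k, (J k * ρ * (J k)ᴴ - (1 / 2 : ℂ) • ((J k)ᴴ * J k * ρ + ρ * ((J k)ᴴ * J k)))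

/-- `ρ` is a density matrix: positive semidefinite with trace one. -/
def IsDensityMatrix {n : Type} [Fintype n] (ρ : Matrix n n ℂ) : Prop :=
  ρ.PosSemidef ∧ ρ.trace = 1

/-- The vectorization `vec(A)` of a matrix (columns stacked on top of each other):
`vec(A)_{(i,j)} = A_{j,i}` (entry in column `i`, row `j`). -/
def vecM {n : Type} (A : Matrix n n ℂ) : n × n → ℂ := fun p => A p.2 p.1

/-- The vectorized Lindblad generator
`L̂ = −i(1⊗H − Hᵀ⊗1) + Σ_k (J̄_k⊗J_k − ½·1⊗(J_k†J_k) − ½·(J_kᵀJ̄_k)⊗1)`. -/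
noncomputable def lindbladHat {n K : Type} [Fintype n] [DecidableEq n] [Fintype K]
    (H : Matrix n n ℂ) (J : K → Matrix n n ℂ) : Matrix (n × n) (n × n) ℂ :=
  (-Complex.I) • ((1 : Matrix n n ℂ) ⊗ₖ H - Hᵀ ⊗ₖ (1 : Matrix n n ℂ)) +
    ∑ k, ((J k).map (starRingEnd ℂ) ⊗ₖ J k
      - (1 / 2 : ℂ) • ((1 : Matrix n n ℂ) ⊗ₖ ((J k)ᴴ * J k))
      - (1 / 2 : ℂ) • (((J k)ᵀ * (J k).map (starRingEnd ℂ)) ⊗ₖ (1 : Matrix n n ℂ)))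

/-- The current matrix `C = Σ_k w_k (J̄_k ⊗ J_k)`. -/
noncomputable def currentMat {n K : Type} [Fintype n] [Fintype K]
    (J : K → Matrix n n ℂ) (w : K → ℝ) : Matrix (n × n) (n × n) ℂ :=
  ∑ k, (w k : ℂ) • ((J k).map (starRingEnd ℂ) ⊗ₖ J k)

/-- The asymptotic average current `F = vec(1)ᴴ C vec(ρˢˢ)`. -/
noncomputable def avgCurrent {n K : Type} [Fintype n] [DecidableEq n] [Fintype K]
    (J : K → Matrix n n ℂ) (w : K → ℝ) (ρ : Matrix n n ℂ) : ℂ :=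
  star (vecM (1 : Matrix n n ℂ)) ⬝ᵥ (currentMat J w *ᵥ vecM ρ)

/-- The integrand `e^{L̂τ} − vec(ρˢˢ)·vec(1)ᴴ` of the improper integral in the noise. -/
noncomputable def noiseIntegrand {n K : Type} [Fintype n] [DecidableEq n] [Fintype K]
    (H : Matrix n n ℂ) (J : K → Matrix n n ℂ) (ρ : Matrix n n ℂ) (τ : ℝ) :
    Matrix (n × n) (n × n) ℂ :=
  NormedSpace.exp ((τ : ℂ) • lindbladHat H J)
    - Matrix.vecMulVec (vecM ρ) (star (vecM (1 : Matrix n n ℂ)))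

/-- Entrywise convergence of the improper integral `∫₀^∞ (e^{L̂τ} − vec(ρˢˢ)vec(1)ᴴ) dτ`. -/
def noiseConv {n K : Type} [Fintype n] [DecidableEq n] [Fintype K]
    (H : Matrix n n ℂ) (J : K → Matrix n n ℂ) (ρ : Matrix n n ℂ) : Prop :=
  ∀ a b, IntegrableOn (fun τ : ℝ => noiseIntegrand H J ρ τ a b) (Set.Ioi 0)

/-- The matrix `∫₀^∞ (e^{L̂τ} − vec(ρˢˢ)vec(1)ᴴ) dτ`, computed entrywise. -/
noncomputable def noiseQ {n K : Type} [Fintype n] [DecidableEq n] [Fintype K]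
    (H : Matrix n n ℂ) (J : K → Matrix n n ℂ) (ρ : Matrix n n ℂ) :
    Matrix (n × n) (n × n) ℂ :=
  Matrix.of fun a b => ∫ τ in Set.Ioi (0 : ℝ), noiseIntegrand H J ρ τ a b

/-- The asymptotic noise
`D = vec(1)ᴴ C₂ vec(ρˢˢ) + 2 vec(1)ᴴ C (∫₀^∞ (e^{L̂τ} − vec(ρˢˢ)vec(1)ᴴ) dτ) C vec(ρˢˢ)`. -/
noncomputable def noise {n K : Type} [Fintype n] [DecidableEq n] [Fintype K]
    (H : Matrix n n ℂ) (J : K → Matrix n n ℂ) (w : K → ℝ) (ρ : Matrix n n ℂ) : ℂ :=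
  star (vecM (1 : Matrix n n ℂ)) ⬝ᵥ (currentMat J (fun k => w k ^ 2) *ᵥ vecM ρ)
    + 2 * (star (vecM (1 : Matrix n n ℂ)) ⬝ᵥ (currentMat J w *ᵥ
        (noiseQ H J ρ *ᵥ (currentMat J w *ᵥ vecM ρ))))

/-
The joint generator obeys a Leibniz rule on product states,
`L(ρ₁ ⊗ ρ₂) = L₁ρ₁ ⊗ ρ₂ + ρ₁ ⊗ L₂ρ₂`, and every Lindbladian is trace-free, so taking partial
traces of the steady-state equation gives `L₁ρ₁ = 0` and `L₂ρ₂ = 0`.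

Up to the index permutation that turns `vec (A ⊗ B)` into `vec A ⊗ vec B`, the vectorized
generator and the current matrix of the joint system are the Kronecker sums `L̂₁ ⊕ L̂₂` and
`C₁ ⊕ C₂`, hence `e^{τL̂} = e^{τL̂₁} ⊗ e^{τL̂₂}`. With `a = vec 1` and `x = vec ρ`, the current is
`aᴴ C x` and the noise integrand is `aᴴ C e^{τL̂} C x − (aᴴ C x)²`. Since `aᴴ x = tr ρ = 1` and
`a`, `x` are left and right fixed vectors of `e^{τL̂ₐ}` (trace preservation and stationarity),
both the current and the first term split into the two subsystems, the latter up to the cross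
term `2 F⁽¹⁾ F⁽²⁾`, which cancels against the cross term of the square.
-/

namespace Matrix

variable {l m n p R : Type*} [CommRing R]

theorem sub_kronecker (A B : Matrix l m R) (C : Matrix n p R) :
    (A - B) ⊗ₖ C = A ⊗ₖ C - B ⊗ₖ C := by
  ext; simp [sub_mul]

theorem kronecker_sub (A : Matrix l m R) (B C : Matrix n p R) :
    A ⊗ₖ (B - C) = A ⊗ₖ B - A ⊗ₖ C := by
  ext; simp [mul_sub]

theorem sum_kronecker {ι : Type*} (s : Finset ι) (A : ι → Matrix l m R) (B : Matrix n p R) :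
    (∑ i ∈ s, A i) ⊗ₖ B = ∑ i ∈ s, A i ⊗ₖ B := by
  ext; simp [Matrix.sum_apply, Finset.sum_mul]

theorem kronecker_sum {ι : Type*} (s : Finset ι) (A : Matrix l m R) (B : ι → Matrix n p R) :
    A ⊗ₖ (∑ i ∈ s, B i) = ∑ i ∈ s, A ⊗ₖ B i := by
  ext; simp [Matrix.sum_apply, Finset.mul_sum]

theorem left_eq_zero_of_kronecker_add_kronecker_eq_zero [Fintype n] {A ρ₁ : Matrix m m R}
    {B ρ₂ : Matrix n n R} (h : A ⊗ₖ ρ₂ + ρ₁ ⊗ₖ B = 0) (hρ₂ : ρ₂.trace = 1)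
    (hB : B.trace = 0) : A = 0 := by
  ext i j
  have := congr_arg (fun M => ∑ s, M (i, s) (j, s)) h
  simp only [trace, diag] at hρ₂ hB
  simpa [Finset.sum_add_distrib, ← Finset.mul_sum, hρ₂, hB] using this

theorem right_eq_zero_of_kronecker_add_kronecker_eq_zero [Fintype m] {A ρ₁ : Matrix m m R}
    {B ρ₂ : Matrix n n R} (h : A ⊗ₖ ρ₂ + ρ₁ ⊗ₖ B = 0) (hρ₁ : ρ₁.trace = 1)
    (hA : A.trace = 0) : B = 0 := by
  ext s t
  have := congr_arg (fun M => ∑ i, M (i, s) (i, t)) h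
  simp only [trace, diag] at hρ₁ hA
  simpa [Finset.sum_add_distrib, ← Finset.sum_mul, hρ₁, hA] using this

variable [DecidableEq m] [DecidableEq n]

def kroneckerSum (A : Matrix m m R) (B : Matrix n n R) : Matrix (m × n) (m × n) R :=
  A ⊗ₖ (1 : Matrix n n R) + (1 : Matrix m m R) ⊗ₖ B

end Matrix

open Matrix

section Vectorization

variable {n K : Type}

theorem vecM_eq_vec (A : Matrix n n ℂ) : vecM A = A.vec := rfl

theorem map_starRingEnd_eq_transpose_conjTranspose (A : Matrix n n ℂ) :
    A.map (starRingEnd ℂ) = Aᴴᵀ := rfl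

variable [Fintype n] [Fintype K]

theorem trace_lindblad (H : Matrix n n ℂ) (J : K → Matrix n n ℂ) (ρ : Matrix n n ℂ) :
    (lindblad H J ρ).trace = 0 := by
  have hcycle : ∀ k, (J k * ρ * (J k)ᴴ).trace = ((J k)ᴴ * J k * ρ).trace := fun k =>
    trace_mul_cycle (J k) ρ (J k)ᴴ
  have hcomm : ∀ k, (ρ * ((J k)ᴴ * J k)).trace = ((J k)ᴴ * J k * ρ).trace := fun k =>
    trace_mul_comm ρ _
  simp only [lindblad, trace_add, trace_smul, trace_sub, trace_sum, trace_mul_comm H ρ, hcycle,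
    hcomm, sub_self, smul_zero, zero_add]
  exact Finset.sum_eq_zero fun k _ => by simp only [smul_eq_mul]; ring

variable [DecidableEq n]

theorem star_vecM_one_dotProduct (A : Matrix n n ℂ) :
    star (vecM (1 : Matrix n n ℂ)) ⬝ᵥ vecM A = A.trace := by
  simp only [vecM_eq_vec, star_vec_dotProduct_vec, conjTranspose_one, one_mul]

theorem lindbladHat_mulVec_vecM (H : Matrix n n ℂ) (J : K → Matrix n n ℂ) (ρ : Matrix n n ℂ) :
    lindbladHat H J *ᵥ vecM ρ = vecM (lindblad H J ρ) := by
  simp only [vecM_eq_vec, lindbladHat, lindblad, map_starRingEnd_eq_transpose_conjTranspose,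
    add_mulVec, sub_mulVec, smul_mulVec, sum_mulVec, kronecker_mulVec_vec, vec_sum, vec_add,
    vec_sub, vec_smul, transpose_one, mul_one, one_mul, transpose_transpose, transpose_mul,
    smul_add, sub_sub]

theorem star_vecM_one_vecMul_lindbladHat (H : Matrix n n ℂ) (J : K → Matrix n n ℂ) :
    star (vecM (1 : Matrix n n ℂ)) ᵥ* lindbladHat H J = 0 := by
  refine dotProduct_eq_zero _ fun x => ?_
  obtain ⟨X, rfl⟩ := vec_bijective.surjective x
  rw [← dotProduct_mulVec, ← vecM_eq_vec, lindbladHat_mulVec_vecM, star_vecM_one_dotProduct,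
    trace_lindblad]

end Vectorization

section Exponential

open NormedSpace

attribute [local instance] Matrix.linftyOpNormedRing Matrix.linftyOpNormedAlgebra

variable {m n : Type*} [Fintype m] [DecidableEq m] [Fintype n] [DecidableEq n]

theorem exp_mulVec_of_mulVec_eq_zero {M : Matrix n n ℂ} {v : n → ℂ} (h : M *ᵥ v = 0) :
    exp M *ᵥ v = v := by
  have hseries : HasSum (fun k : ℕ => ((k.factorial : ℚ)⁻¹ • M ^ k) *ᵥ v) (exp M *ᵥ v) :=
    (exp_series_hasSum_exp' M).map (mulVec.addMonoidHomLeft v)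
      (continuous_id.matrix_mulVec continuous_const)
  have hterm : ∀ k ≠ 0, ((k.factorial : ℚ)⁻¹ • M ^ k) *ᵥ v = 0 := by
    rintro (_ | k) hk
    · contradiction
    · rw [smul_mulVec, pow_succ, ← mulVec_mulVec, h, mulVec_zero, smul_zero]
  simpa using hseries.unique (hasSum_single 0 hterm)

theorem vecMul_exp_of_vecMul_eq_zero {M : Matrix n n ℂ} {v : n → ℂ} (h : v ᵥ* M = 0) :
    v ᵥ* exp M = v := by
  rw [← mulVec_transpose, ← exp_transpose]
  exact exp_mulVec_of_mulVec_eq_zero (by rwa [mulVec_transpose])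

theorem exp_reindex (e : m ≃ n) (A : Matrix m m ℂ) :
    exp (reindex e e A) = reindex e e (exp A) :=
  (map_exp (reindexAlgEquiv ℚ ℂ e)
    (continuous_id.matrix_reindex e e : Continuous fun A : Matrix m m ℂ => reindex e e A) A).symm

theorem exp_blockDiagonal_const (A : Matrix m m ℂ) :
    exp (blockDiagonal fun _ : n => A) = blockDiagonal fun _ => exp A :=
  (map_exp ((blockDiagonalRingHom m n ℂ).comp (Pi.constRingHom n _))
    ((continuous_pi fun _ => continuous_id).matrix_blockDiagonal :
      Continuous fun A : Matrix m m ℂ => blockDiagonal fun _ : n => A) A).symm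

theorem exp_kronecker_one (A : Matrix m m ℂ) :
    exp (A ⊗ₖ (1 : Matrix n n ℂ)) = exp A ⊗ₖ (1 : Matrix n n ℂ) := by
  rw [kronecker_one, kronecker_one, exp_blockDiagonal_const]

theorem exp_one_kronecker (B : Matrix n n ℂ) :
    exp ((1 : Matrix m m ℂ) ⊗ₖ B) = (1 : Matrix m m ℂ) ⊗ₖ exp B := by
  rw [one_kronecker, one_kronecker, exp_reindex, exp_blockDiagonal_const]

theorem exp_kroneckerSum (A : Matrix m m ℂ) (B : Matrix n n ℂ) :
    exp (kroneckerSum A B) = exp A ⊗ₖ exp B := by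
  have hcomm : Commute (A ⊗ₖ (1 : Matrix n n ℂ)) ((1 : Matrix m m ℂ) ⊗ₖ B) := by
    simp only [Commute, SemiconjBy, ← mul_kronecker_mul, one_mul, mul_one]
  rw [kroneckerSum, Matrix.exp_add_of_commute _ _ hcomm, exp_kronecker_one, exp_one_kronecker,
    ← mul_kronecker_mul, mul_one, one_mul]

end Exponential

section KroneckerVector

variable {R α β : Type*} [CommRing R]

def vecKronecker (u : α → R) (v : β → R) : α × β → R := fun p => u p.1 * v p.2

theorem star_vecKronecker [StarRing R] (u : α → R) (v : β → R) :
    star (vecKronecker u v) = vecKronecker (star u) (star v) := by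
  ext; simp [vecKronecker]

theorem vecM_kronecker {m n : Type} (A : Matrix m m ℂ) (B : Matrix n n ℂ) :
    vecM (A ⊗ₖ B) = vecKronecker (vecM A) (vecM B) ∘ Equiv.prodProdProdComm m n m n := rfl

theorem vecM_one_prod {m n : Type} [DecidableEq m] [DecidableEq n] :
    vecM (1 : Matrix (m × n) (m × n) ℂ)
      = vecKronecker (vecM 1) (vecM 1) ∘ Equiv.prodProdProdComm m n m n := by
  rw [← one_kronecker_one, vecM_kronecker]

variable [Fintype α] [Fintype β]

theorem vecKronecker_dotProduct_vecKronecker (u u' : α → R) (v v' : β → R) :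
    vecKronecker u v ⬝ᵥ vecKronecker u' v' = (u ⬝ᵥ u') * (v ⬝ᵥ v') := by
  simp only [dotProduct, vecKronecker, Fintype.sum_prod_type, Finset.sum_mul_sum]
  exact Finset.sum_congr rfl fun _ _ => Finset.sum_congr rfl fun _ _ => by ring

theorem kronecker_mulVec_vecKronecker (A : Matrix α α R) (B : Matrix β β R) (u : α → R)
    (v : β → R) : (A ⊗ₖ B) *ᵥ vecKronecker u v = vecKronecker (A *ᵥ u) (B *ᵥ v) := by
  ext p
  simp only [mulVec, dotProduct, vecKronecker, Fintype.sum_prod_type, kroneckerMap_apply,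
    Finset.sum_mul_sum]
  exact Finset.sum_congr rfl fun _ _ => Finset.sum_congr rfl fun _ _ => by ring

theorem kroneckerSum_mulVec_vecKronecker [DecidableEq α] [DecidableEq β] (A : Matrix α α R)
    (B : Matrix β β R) (u : α → R) (v : β → R) :
    kroneckerSum A B *ᵥ vecKronecker u v = vecKronecker (A *ᵥ u) v + vecKronecker u (B *ᵥ v) := by
  rw [kroneckerSum, add_mulVec, kronecker_mulVec_vecKronecker, kronecker_mulVec_vecKronecker,
    one_mulVec, one_mulVec]

end KroneckerVector

section Reindex

theorem Pi.star_comp {α β R : Type*} [Star R] (u : β → R) (e : α → β) :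
    star (u ∘ e) = star u ∘ e := rfl

variable {R ι κ : Type*} [CommRing R]

theorem reindex_mulVec_comp [Fintype ι] [Fintype κ] (e : ι ≃ κ) (M : Matrix κ κ R)
    (v : κ → R) : reindex e.symm e.symm M *ᵥ (v ∘ e) = (M *ᵥ v) ∘ e := by
  rw [reindex_apply, Equiv.symm_symm, submatrix_mulVec_equiv, Function.comp_assoc,
    Equiv.self_comp_symm, Function.comp_id]

theorem reindex_kronecker_kronecker_kronecker_comm (A C : Matrix ι ι R) (B D : Matrix κ κ R) :
    reindex (Equiv.prodProdProdComm ι κ ι κ) (Equiv.prodProdProdComm ι κ ι κ)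
      ((A ⊗ₖ B) ⊗ₖ (C ⊗ₖ D)) = (A ⊗ₖ C) ⊗ₖ (B ⊗ₖ D) := by
  ext; simp [mul_mul_mul_comm]

end Reindex

section ConnectedCorrelation

variable {ι κ : Type*} [Fintype ι] [Fintype κ]

/-- With `a = vec 1`, `x = vec ρˢˢ` and `E = e^{L̂τ}`, the integrand of the second term of the
noise. -/
def connectedCorrelation (a x : ι → ℂ) (C E : Matrix ι ι ℂ) : ℂ :=
  star a ⬝ᵥ (C *ᵥ ((E - vecMulVec x (star a)) *ᵥ (C *ᵥ x)))

theorem connectedCorrelation_eq (a x : ι → ℂ) (C E : Matrix ι ι ℂ) :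
    connectedCorrelation a x C E
      = star a ⬝ᵥ (C *ᵥ (E *ᵥ (C *ᵥ x))) - (star a ⬝ᵥ (C *ᵥ x)) ^ 2 := by
  rw [connectedCorrelation, sub_mulVec, vecMulVec_mulVec, mulVec_sub, dotProduct_sub,
    op_smul_eq_smul, mulVec_smul, dotProduct_smul, smul_eq_mul, sq]

theorem connectedCorrelation_reindex (e : ι ≃ κ) (a x : κ → ℂ) (C E : Matrix κ κ ℂ) :
    connectedCorrelation (a ∘ e) (x ∘ e) (reindex e.symm e.symm C) (reindex e.symm e.symm E)
      = connectedCorrelation a x C E := by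
  simp only [connectedCorrelation_eq, reindex_mulVec_comp]
  rw [Pi.star_comp, comp_equiv_dotProduct_comp_equiv, comp_equiv_dotProduct_comp_equiv]

variable [DecidableEq ι] [DecidableEq κ] {a₁ x₁ : ι → ℂ} {a₂ x₂ : κ → ℂ}

theorem star_vecKronecker_dotProduct_kroneckerSum_mulVec (h₁ : star a₁ ⬝ᵥ x₁ = 1)
    (h₂ : star a₂ ⬝ᵥ x₂ = 1) (C₁ : Matrix ι ι ℂ) (C₂ : Matrix κ κ ℂ) :
    star (vecKronecker a₁ a₂) ⬝ᵥ (kroneckerSum C₁ C₂ *ᵥ vecKronecker x₁ x₂)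
      = star a₁ ⬝ᵥ (C₁ *ᵥ x₁) + star a₂ ⬝ᵥ (C₂ *ᵥ x₂) := by
  rw [kroneckerSum_mulVec_vecKronecker, star_vecKronecker, dotProduct_add,
    vecKronecker_dotProduct_vecKronecker, vecKronecker_dotProduct_vecKronecker, h₁, h₂, mul_one,
    one_mul]

theorem connectedCorrelation_kroneckerSum (h₁ : star a₁ ⬝ᵥ x₁ = 1) (h₂ : star a₂ ⬝ᵥ x₂ = 1)
    {E₁ : Matrix ι ι ℂ} {E₂ : Matrix κ κ ℂ} (hE₁a : star a₁ ᵥ* E₁ = star a₁)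
    (hE₂a : star a₂ ᵥ* E₂ = star a₂) (hE₁x : E₁ *ᵥ x₁ = x₁) (hE₂x : E₂ *ᵥ x₂ = x₂)
    (C₁ : Matrix ι ι ℂ) (C₂ : Matrix κ κ ℂ) :
    connectedCorrelation (vecKronecker a₁ a₂) (vecKronecker x₁ x₂) (kroneckerSum C₁ C₂)
        (E₁ ⊗ₖ E₂)
      = connectedCorrelation a₁ x₁ C₁ E₁ + connectedCorrelation a₂ x₂ C₂ E₂ := by
  have hE₁ : ∀ y, star a₁ ⬝ᵥ (E₁ *ᵥ y) = star a₁ ⬝ᵥ y := fun y => by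
    rw [dotProduct_mulVec, hE₁a]
  have hE₂ : ∀ y, star a₂ ⬝ᵥ (E₂ *ᵥ y) = star a₂ ⬝ᵥ y := fun y => by
    rw [dotProduct_mulVec, hE₂a]
  simp only [connectedCorrelation_eq, star_vecKronecker_dotProduct_kroneckerSum_mulVec h₁ h₂]
  rw [kroneckerSum_mulVec_vecKronecker, mulVec_add, kronecker_mulVec_vecKronecker,
    kronecker_mulVec_vecKronecker, hE₁x, hE₂x, mulVec_add, kroneckerSum_mulVec_vecKronecker,
    kroneckerSum_mulVec_vecKronecker, star_vecKronecker]
  simp only [dotProduct_add, vecKronecker_dotProduct_vecKronecker, hE₁, hE₂, h₁, h₂]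
  ring

end ConnectedCorrelation

section EntrywiseIntegral

variable {X ι : Type*} [MeasurableSpace X] {μ : Measure X} [Fintype ι] {F : X → Matrix ι ι ℂ}

theorem integrable_dotProduct_mulVec (hF : ∀ i j, Integrable (fun t => F t i j) μ)
    (u v : ι → ℂ) : Integrable (fun t => u ⬝ᵥ (F t *ᵥ v)) μ := by
  simp only [dotProduct, mulVec, Finset.mul_sum]
  exact integrable_finsetSum _ fun i _ => integrable_finsetSum _ fun j _ =>
    ((hF i j).mul_const (v j)).const_mul (u i)

theorem dotProduct_integral_mulVec (hF : ∀ i j, Integrable (fun t => F t i j) μ)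
    (u v : ι → ℂ) :
    u ⬝ᵥ (of (fun i j => ∫ t, F t i j ∂μ) *ᵥ v) = ∫ t, u ⬝ᵥ (F t *ᵥ v) ∂μ := by
  simp only [dotProduct, mulVec, Finset.mul_sum, of_apply]
  rw [integral_finsetSum _ fun i _ => integrable_finsetSum _ fun j _ =>
    ((hF i j).mul_const (v j)).const_mul (u i)]
  refine Finset.sum_congr rfl fun i _ => ?_
  rw [integral_finsetSum _ fun j _ => ((hF i j).mul_const (v j)).const_mul (u i)]
  simp only [integral_const_mul, integral_mul_const]

end EntrywiseIntegral

section Noise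

variable {n K : Type} [Fintype n] [DecidableEq n] [Fintype K]

theorem integrableOn_connectedCorrelation {H : Matrix n n ℂ} {J : K → Matrix n n ℂ}
    {ρ : Matrix n n ℂ} (hconv : noiseConv H J ρ) (w : K → ℝ) :
    IntegrableOn (fun τ : ℝ => connectedCorrelation (vecM 1) (vecM ρ) (currentMat J w)
      (NormedSpace.exp ((τ : ℂ) • lindbladHat H J))) (Set.Ioi 0) := by
  simp only [connectedCorrelation, dotProduct_mulVec _ (currentMat J w)]
  exact integrable_dotProduct_mulVec hconv _ _

theorem noise_eq_integral {H : Matrix n n ℂ} {J : K → Matrix n n ℂ} {ρ : Matrix n n ℂ}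
    (hconv : noiseConv H J ρ) (w : K → ℝ) :
    noise H J w ρ = avgCurrent J (fun k => w k ^ 2) ρ
      + 2 * ∫ τ : ℝ in Set.Ioi 0, connectedCorrelation (vecM 1) (vecM ρ) (currentMat J w)
        (NormedSpace.exp ((τ : ℂ) • lindbladHat H J)) := by
  simp only [noise, avgCurrent, connectedCorrelation, dotProduct_mulVec _ (currentMat J w), noiseQ,
    dotProduct_integral_mulVec hconv]
  rfl

end Noise

section Semigroup

variable {n K : Type} [Fintype n] [DecidableEq n] [Fintype K]

theorem star_vecM_one_vecMul_exp_lindbladHat (H : Matrix n n ℂ) (J : K → Matrix n n ℂ) (t : ℂ) :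
    star (vecM (1 : Matrix n n ℂ)) ᵥ* NormedSpace.exp (t • lindbladHat H J)
      = star (vecM (1 : Matrix n n ℂ)) :=
  vecMul_exp_of_vecMul_eq_zero (by rw [vecMul_smul, star_vecM_one_vecMul_lindbladHat, smul_zero])

theorem exp_lindbladHat_mulVec_vecM {H : Matrix n n ℂ} {J : K → Matrix n n ℂ} {ρ : Matrix n n ℂ}
    (h : lindblad H J ρ = 0) (t : ℂ) :
    NormedSpace.exp (t • lindbladHat H J) *ᵥ vecM ρ = vecM ρ :=
  exp_mulVec_of_mulVec_eq_zero <| by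
    rw [smul_mulVec, lindbladHat_mulVec_vecM, h, vecM_eq_vec, vec_zero, smul_zero]

end Semigroup

section JointSystem

variable {n₁ n₂ K₁ K₂ : Type} [Fintype n₁] [DecidableEq n₁] [Fintype n₂] [DecidableEq n₂]
  [Fintype K₁] [Fintype K₂]

def jointJumps (J₁ : K₁ → Matrix n₁ n₁ ℂ) (J₂ : K₂ → Matrix n₂ n₂ ℂ) :
    K₁ ⊕ K₂ → Matrix (n₁ × n₂) (n₁ × n₂) ℂ :=
  Sum.elim (fun k => J₁ k ⊗ₖ (1 : Matrix n₂ n₂ ℂ)) (fun k => (1 : Matrix n₁ n₁ ℂ) ⊗ₖ J₂ k)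

theorem lindblad_joint (H₁ : Matrix n₁ n₁ ℂ) (J₁ : K₁ → Matrix n₁ n₁ ℂ) (H₂ : Matrix n₂ n₂ ℂ)
    (J₂ : K₂ → Matrix n₂ n₂ ℂ) (ρ₁ : Matrix n₁ n₁ ℂ) (ρ₂ : Matrix n₂ n₂ ℂ) :
    lindblad (kroneckerSum H₁ H₂) (jointJumps J₁ J₂) (ρ₁ ⊗ₖ ρ₂)
      = lindblad H₁ J₁ ρ₁ ⊗ₖ ρ₂ + ρ₁ ⊗ₖ lindblad H₂ J₂ ρ₂ := by
  simp only [lindblad, kroneckerSum, jointJumps, Fintype.sum_sum_type, Sum.elim_inl,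
    Sum.elim_inr, conjTranspose_kronecker, conjTranspose_one, add_mul, mul_add,
    ← mul_kronecker_mul, one_mul, mul_one, add_kronecker, kronecker_add, sub_kronecker,
    kronecker_sub, smul_kronecker, kronecker_smul, sum_kronecker, kronecker_sum, smul_add,
    smul_sub, Finset.sum_add_distrib, Finset.sum_sub_distrib]
  abel

theorem lindbladHat_joint (H₁ : Matrix n₁ n₁ ℂ) (J₁ : K₁ → Matrix n₁ n₁ ℂ) (H₂ : Matrix n₂ n₂ ℂ)
    (J₂ : K₂ → Matrix n₂ n₂ ℂ) :
    lindbladHat (kroneckerSum H₁ H₂) (jointJumps J₁ J₂)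
      = reindex (Equiv.prodProdProdComm n₁ n₂ n₁ n₂).symm (Equiv.prodProdProdComm n₁ n₂ n₁ n₂).symm
          (kroneckerSum (lindbladHat H₁ J₁) (lindbladHat H₂ J₂)) := by
  rw [← reindex_symm, Equiv.eq_symm_apply, ← coe_reindexLinearEquiv ℂ ℂ]
  simp only [lindbladHat, kroneckerSum, jointJumps, map_starRingEnd_eq_transpose_conjTranspose,
    Fintype.sum_sum_type, Sum.elim_inl, Sum.elim_inr, conjTranspose_kronecker, conjTranspose_one,
    ← kroneckerMap_transpose, transpose_one, transpose_add, ← mul_kronecker_mul, mul_one,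
    add_kronecker, kronecker_add, sub_kronecker, kronecker_sub, smul_kronecker, kronecker_smul,
    sum_kronecker, kronecker_sum, map_add, map_sub, map_smul, map_sum, smul_add, smul_sub,
    Finset.sum_sub_distrib, ← one_kronecker_one, coe_reindexLinearEquiv,
    reindex_kronecker_kronecker_kronecker_comm]
  abel

theorem currentMat_joint (J₁ : K₁ → Matrix n₁ n₁ ℂ) (J₂ : K₂ → Matrix n₂ n₂ ℂ) (w₁ : K₁ → ℝ)
    (w₂ : K₂ → ℝ) :
    currentMat (jointJumps J₁ J₂) (Sum.elim w₁ w₂)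
      = reindex (Equiv.prodProdProdComm n₁ n₂ n₁ n₂).symm (Equiv.prodProdProdComm n₁ n₂ n₁ n₂).symm
          (kroneckerSum (currentMat J₁ w₁) (currentMat J₂ w₂)) := by
  rw [← reindex_symm, Equiv.eq_symm_apply, ← coe_reindexLinearEquiv ℂ ℂ]
  simp only [currentMat, kroneckerSum, jointJumps, map_starRingEnd_eq_transpose_conjTranspose,
    Fintype.sum_sum_type, Sum.elim_inl, Sum.elim_inr, conjTranspose_kronecker, conjTranspose_one,
    ← kroneckerMap_transpose, transpose_one, smul_kronecker,
    kronecker_smul, sum_kronecker, kronecker_sum, map_add, map_smul, map_sum, ← one_kronecker_one,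
    coe_reindexLinearEquiv, reindex_kronecker_kronecker_kronecker_comm]

theorem exp_lindbladHat_joint (H₁ : Matrix n₁ n₁ ℂ) (J₁ : K₁ → Matrix n₁ n₁ ℂ)
    (H₂ : Matrix n₂ n₂ ℂ) (J₂ : K₂ → Matrix n₂ n₂ ℂ) (t : ℂ) :
    NormedSpace.exp (t • lindbladHat (kroneckerSum H₁ H₂) (jointJumps J₁ J₂))
      = reindex (Equiv.prodProdProdComm n₁ n₂ n₁ n₂).symm (Equiv.prodProdProdComm n₁ n₂ n₁ n₂).symm
          (NormedSpace.exp (t • lindbladHat H₁ J₁) ⊗ₖ NormedSpace.exp (t • lindbladHat H₂ J₂)) := by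
  rw [lindbladHat_joint, ← coe_reindexLinearEquiv ℂ ℂ, ← map_smul, coe_reindexLinearEquiv,
    exp_reindex, kroneckerSum, smul_add, ← smul_kronecker, ← kronecker_smul, ← kroneckerSum,
    exp_kroneckerSum]

variable {ρ₁ : Matrix n₁ n₁ ℂ} {ρ₂ : Matrix n₂ n₂ ℂ}

theorem avgCurrent_joint (hρ₁ : ρ₁.trace = 1) (hρ₂ : ρ₂.trace = 1) (J₁ : K₁ → Matrix n₁ n₁ ℂ)
    (J₂ : K₂ → Matrix n₂ n₂ ℂ) (w₁ : K₁ → ℝ) (w₂ : K₂ → ℝ) :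
    avgCurrent (jointJumps J₁ J₂) (Sum.elim w₁ w₂) (ρ₁ ⊗ₖ ρ₂)
      = avgCurrent J₁ w₁ ρ₁ + avgCurrent J₂ w₂ ρ₂ := by
  rw [avgCurrent, currentMat_joint, vecM_one_prod, vecM_kronecker, reindex_mulVec_comp,
    Pi.star_comp, comp_equiv_dotProduct_comp_equiv, star_vecKronecker_dotProduct_kroneckerSum_mulVec
      (by rw [star_vecM_one_dotProduct, hρ₁]) (by rw [star_vecM_one_dotProduct, hρ₂])]
  rfl

theorem connectedCorrelation_joint (hρ₁ : ρ₁.trace = 1) (hρ₂ : ρ₂.trace = 1)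
    {H₁ : Matrix n₁ n₁ ℂ} {J₁ : K₁ → Matrix n₁ n₁ ℂ} {H₂ : Matrix n₂ n₂ ℂ}
    {J₂ : K₂ → Matrix n₂ n₂ ℂ} (hL₁ : lindblad H₁ J₁ ρ₁ = 0) (hL₂ : lindblad H₂ J₂ ρ₂ = 0)
    (w₁ : K₁ → ℝ) (w₂ : K₂ → ℝ) (t : ℂ) :
    connectedCorrelation (vecM 1) (vecM (ρ₁ ⊗ₖ ρ₂)) (currentMat (jointJumps J₁ J₂) (Sum.elim w₁ w₂))
        (NormedSpace.exp (t • lindbladHat (kroneckerSum H₁ H₂) (jointJumps J₁ J₂)))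
      = connectedCorrelation (vecM 1) (vecM ρ₁) (currentMat J₁ w₁)
          (NormedSpace.exp (t • lindbladHat H₁ J₁))
        + connectedCorrelation (vecM 1) (vecM ρ₂) (currentMat J₂ w₂)
          (NormedSpace.exp (t • lindbladHat H₂ J₂)) := by
  rw [vecM_one_prod, vecM_kronecker, currentMat_joint, exp_lindbladHat_joint,
    connectedCorrelation_reindex]
  exact connectedCorrelation_kroneckerSum (by rw [star_vecM_one_dotProduct, hρ₁])
    (by rw [star_vecM_one_dotProduct, hρ₂]) (star_vecM_one_vecMul_exp_lindbladHat H₁ J₁ t)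
    (star_vecM_one_vecMul_exp_lindbladHat H₂ J₂ t) (exp_lindbladHat_mulVec_vecM hL₁ t)
    (exp_lindbladHat_mulVec_vecM hL₂ t) _ _

theorem noise_joint (hρ₁ : ρ₁.trace = 1) (hρ₂ : ρ₂.trace = 1) {H₁ : Matrix n₁ n₁ ℂ}
    {J₁ : K₁ → Matrix n₁ n₁ ℂ} {H₂ : Matrix n₂ n₂ ℂ} {J₂ : K₂ → Matrix n₂ n₂ ℂ}
    (hL₁ : lindblad H₁ J₁ ρ₁ = 0) (hL₂ : lindblad H₂ J₂ ρ₂ = 0)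
    (hconv : noiseConv (kroneckerSum H₁ H₂) (jointJumps J₁ J₂) (ρ₁ ⊗ₖ ρ₂))
    (hconv₁ : noiseConv H₁ J₁ ρ₁) (hconv₂ : noiseConv H₂ J₂ ρ₂) (w₁ : K₁ → ℝ) (w₂ : K₂ → ℝ) :
    noise (kroneckerSum H₁ H₂) (jointJumps J₁ J₂) (Sum.elim w₁ w₂) (ρ₁ ⊗ₖ ρ₂)
      = noise H₁ J₁ w₁ ρ₁ + noise H₂ J₂ w₂ ρ₂ := by
  have hsq : (fun k => Sum.elim w₁ w₂ k ^ 2)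
      = Sum.elim (fun k => w₁ k ^ 2) (fun k => w₂ k ^ 2) := by
    ext (_ | _) <;> rfl
  simp only [noise_eq_integral hconv, noise_eq_integral hconv₁, noise_eq_integral hconv₂, hsq,
    avgCurrent_joint hρ₁ hρ₂, connectedCorrelation_joint hρ₁ hρ₂ hL₁ hL₂,
    integral_add (integrableOn_connectedCorrelation hconv₁ w₁)
      (integrableOn_connectedCorrelation hconv₂ w₂)]
  ring

end JointSystem

theorem lindblad_joint_additivity_general
    {n₁ n₂ K₁ K₂ : Type} [Fintype n₁] [DecidableEq n₁] [Fintype n₂] [DecidableEq n₂]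
    [Fintype K₁] [Fintype K₂]
    (H₁ : Matrix n₁ n₁ ℂ) (J₁ : K₁ → Matrix n₁ n₁ ℂ) (w₁ : K₁ → ℝ)
    (H₂ : Matrix n₂ n₂ ℂ) (J₂ : K₂ → Matrix n₂ n₂ ℂ) (w₂ : K₂ → ℝ)
    (ρ₁ : Matrix n₁ n₁ ℂ) (hρ₁ : IsDensityMatrix ρ₁)
    (ρ₂ : Matrix n₂ n₂ ℂ) (hρ₂ : IsDensityMatrix ρ₂)
    -- the joint generator: Hamiltonian `H₁⊗1 + 1⊗H₂`, jump operators `J_{1,k}⊗1`, `1⊗J_{2,k}`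
    (Hjoint : Matrix (n₁ × n₂) (n₁ × n₂) ℂ)
    (hHjoint : Hjoint = H₁ ⊗ₖ (1 : Matrix n₂ n₂ ℂ) + (1 : Matrix n₁ n₁ ℂ) ⊗ₖ H₂)
    (Jjoint : K₁ ⊕ K₂ → Matrix (n₁ × n₂) (n₁ × n₂) ℂ)
    (hJjoint : Jjoint = Sum.elim (fun k => J₁ k ⊗ₖ (1 : Matrix n₂ n₂ ℂ))
        (fun k => (1 : Matrix n₁ n₁ ℂ) ⊗ₖ J₂ k))
    (wjoint : K₁ ⊕ K₂ → ℝ) (hwjoint : wjoint = Sum.elim w₁ w₂)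
    -- `ρ₁ ⊗ ρ₂` is a steady state of the joint generator
    (hsteady : lindblad Hjoint Jjoint (ρ₁ ⊗ₖ ρ₂) = 0)
    -- convergence of all the improper noise integrals
    (hconv : noiseConv Hjoint Jjoint (ρ₁ ⊗ₖ ρ₂))
    (hconv₁ : noiseConv H₁ J₁ ρ₁) (hconv₂ : noiseConv H₂ J₂ ρ₂) :
    lindblad H₁ J₁ ρ₁ = 0
    ∧ lindblad H₂ J₂ ρ₂ = 0
    ∧ avgCurrent Jjoint wjoint (ρ₁ ⊗ₖ ρ₂) = avgCurrent J₁ w₁ ρ₁ + avgCurrent J₂ w₂ ρ₂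
    ∧ noise Hjoint Jjoint wjoint (ρ₁ ⊗ₖ ρ₂) = noise H₁ J₁ w₁ ρ₁ + noise H₂ J₂ w₂ ρ₂ := by
  obtain rfl : Hjoint = kroneckerSum H₁ H₂ := hHjoint
  obtain rfl : Jjoint = jointJumps J₁ J₂ := hJjoint
  subst hwjoint
  rw [lindblad_joint] at hsteady
  have hL₁ : lindblad H₁ J₁ ρ₁ = 0 :=
    left_eq_zero_of_kronecker_add_kronecker_eq_zero hsteady hρ₂.2 (trace_lindblad H₂ J₂ ρ₂)
  have hL₂ : lindblad H₂ J₂ ρ₂ = 0 :=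
    right_eq_zero_of_kronecker_add_kronecker_eq_zero hsteady hρ₁.2 (trace_lindblad H₁ J₁ ρ₁)
  exact ⟨hL₁, hL₂, avgCurrent_joint hρ₁.2 hρ₂.2 J₁ J₂ w₁ w₂,
    noise_joint hρ₁.2 hρ₂.2 hL₁ hL₂ hconv hconv₁ hconv₂ w₁ w₂⟩

/-- **Additivity of current and noise for independent subsystems (Proposition 3).**
For Lindblad generators `(H_a, {J_{a,k}})` on the two factors (`a = 1, 2`) with weights
`{w⁽ᵃ⁾_k}`, consider the joint generator with Hamiltonian `H₁⊗1 + 1⊗H₂` and jump operators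
`J_{1,k}⊗1` (weight `w⁽¹⁾_k`) and `1⊗J_{2,k}` (weight `w⁽²⁾_k`). If the joint system has a
product steady state `ρˢˢ = ρ₁ ⊗ ρ₂` of density matrices, and all three noise integrals
converge entrywise, then each `ρ_a` is a steady state of its own generator, and the joint
average current and noise satisfy `F = F⁽¹⁾ + F⁽²⁾` and `D = D⁽¹⁾ + D⁽²⁾`. -/
theorem lindblad_joint_additivity
    {n₁ n₂ K₁ K₂ : Type} [Fintype n₁] [DecidableEq n₁] [Fintype n₂] [DecidableEq n₂]
    [Fintype K₁] [Fintype K₂]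
    (H₁ : Matrix n₁ n₁ ℂ) (hH₁ : H₁.IsHermitian) (J₁ : K₁ → Matrix n₁ n₁ ℂ) (w₁ : K₁ → ℝ)
    (H₂ : Matrix n₂ n₂ ℂ) (hH₂ : H₂.IsHermitian) (J₂ : K₂ → Matrix n₂ n₂ ℂ) (w₂ : K₂ → ℝ)
    (ρ₁ : Matrix n₁ n₁ ℂ) (hρ₁ : IsDensityMatrix ρ₁)
    (ρ₂ : Matrix n₂ n₂ ℂ) (hρ₂ : IsDensityMatrix ρ₂)
    -- the joint generator: Hamiltonian `H₁⊗1 + 1⊗H₂`, jump operators `J_{1,k}⊗1`, `1⊗J_{2,k}`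
    (Hjoint : Matrix (n₁ × n₂) (n₁ × n₂) ℂ)
    (hHjoint : Hjoint = H₁ ⊗ₖ (1 : Matrix n₂ n₂ ℂ) + (1 : Matrix n₁ n₁ ℂ) ⊗ₖ H₂)
    (Jjoint : K₁ ⊕ K₂ → Matrix (n₁ × n₂) (n₁ × n₂) ℂ)
    (hJjoint : Jjoint = Sum.elim (fun k => J₁ k ⊗ₖ (1 : Matrix n₂ n₂ ℂ))
        (fun k => (1 : Matrix n₁ n₁ ℂ) ⊗ₖ J₂ k))
    (wjoint : K₁ ⊕ K₂ → ℝ) (hwjoint : wjoint = Sum.elim w₁ w₂)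
    -- `ρ₁ ⊗ ρ₂` is a steady state of the joint generator
    (hsteady : lindblad Hjoint Jjoint (ρ₁ ⊗ₖ ρ₂) = 0)
    -- convergence of all the improper noise integrals
    (hconv : noiseConv Hjoint Jjoint (ρ₁ ⊗ₖ ρ₂))
    (hconv₁ : noiseConv H₁ J₁ ρ₁) (hconv₂ : noiseConv H₂ J₂ ρ₂) :
    lindblad H₁ J₁ ρ₁ = 0
    ∧ lindblad H₂ J₂ ρ₂ = 0
    ∧ avgCurrent Jjoint wjoint (ρ₁ ⊗ₖ ρ₂) = avgCurrent J₁ w₁ ρ₁ + avgCurrent J₂ w₂ ρ₂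
    ∧ noise Hjoint Jjoint wjoint (ρ₁ ⊗ₖ ρ₂) = noise H₁ J₁ w₁ ρ₁ + noise H₂ J₂ w₂ ρ₂ :=
  lindblad_joint_additivity_general H₁ J₁ w₁ H₂ J₂ w₂ ρ₁ hρ₁ ρ₂ hρ₂ Hjoint hHjoint Jjoint hJjoint
    wjoint hwjoint hsteady hconv hconv₁ hconv₂
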